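/- arXiv:2509.21572 — 2 statements merged into one kernel-verified Lean document; each statement's English description precedes it below -/
import Mathlib

section
/- Let f : ℝ → ℝ be differentiable at 0 and let p be an even probability density with mean zero. Define R̄₁(x) = f(x) + f(−x) − 2f(0). If R̄₁(x) < 0 for all x > 0, then for every γ > 0, ∫ f(x) √γ p(√γ x) dx < f(0). In particular γ ↦ ∫ f(x) √γ p(√γ x) dx has no maximizer on (0,∞) provided its supremum equals f(0). -/
open MeasureTheory Set Real

theorem stmt4 (f p : ℝ → ℝ)
    (hf : DifferentiableAt ℝ f 0)
    (hnn : ∀ x, 0 ≤ p x) (hint : Integrable p)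
    (hprob : ∫ x, p x = 1)
    (heven : ∀ x, p (-x) = p x)
    (hmean : ∫ x, x * p x = 0)
    (hpos : ∀ γ : ℝ, 0 < γ → 0 < ∫ x in Ioi (0:ℝ), p (Real.sqrt γ * x))
    (hintfp : ∀ γ : ℝ, 0 < γ →
      Integrable (fun x => f x * (Real.sqrt γ * p (Real.sqrt γ * x))))
    (hR : ∀ x : ℝ, 0 < x → f x + f (-x) - 2 * f 0 < 0) :
    (∀ γ : ℝ, 0 < γ →
        (∫ x, f x * (Real.sqrt γ * p (Real.sqrt γ * x))) < f 0) ∧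
    (IsLUB ((fun γ => ∫ x, f x * (Real.sqrt γ * p (Real.sqrt γ * x))) '' Ioi 0) (f 0) →
      ¬ ∃ γ₀ ∈ Ioi (0:ℝ), ∀ γ ∈ Ioi (0:ℝ),
        (∫ x, f x * (Real.sqrt γ * p (Real.sqrt γ * x))) ≤
        (∫ x, f x * (Real.sqrt γ₀ * p (Real.sqrt γ₀ * x)))) := by
  have key : ∀ γ : ℝ, 0 < γ →
      (∫ x, f x * (Real.sqrt γ * p (Real.sqrt γ * x))) < f 0 := by
    intro γ hγ
    set c := Real.sqrt γ with hc
    have hc0 : 0 < c := Real.sqrt_pos.2 hγ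
    -- evenness of x ↦ p (c * x)
    have hpeven : ∀ x : ℝ, p (c * (-x)) = p (c * x) := by
      intro x; rw [mul_neg, heven]
    -- integrability of x ↦ p (c * x)
    have hpc : Integrable (fun x => p (c * x)) := hint.comp_mul_left' hc0.ne'
    -- total mass
    have hmass : (∫ x, c * p (c * x)) = 1 := by
      rw [integral_const_mul, Measure.integral_comp_mul_left (fun y => p y) c,
        abs_of_pos (inv_pos.2 hc0), smul_eq_mul, hprob]
      field_simp
    -- integrability of the three pieces
    have t1 : Integrable (fun x => f x * (c * p (c * x))) := hintfp γ hγ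
    have t2 : Integrable (fun x => f (-x) * (c * p (c * x))) := by
      have := t1.comp_mul_left' (R := (-1:ℝ)) (by norm_num)
      simpa [neg_one_mul, heven] using this
    have t3 : Integrable (fun x => (2 * f 0) * (c * p (c * x))) :=
      ((hpc.const_mul c).const_mul (2 * f 0))
    -- symmetry of the integral
    have hsym : (∫ x, f (-x) * (c * p (c * x))) = ∫ x, f x * (c * p (c * x)) := by
      rw [← integral_neg_eq_self (fun x => f x * (c * p (c * x))) volume]
      congr 1; funext x; rw [hpeven]
    -- the symmetrized remainder integral is negative
    have hRle : ∀ x : ℝ, (f x + f (-x) - 2 * f 0) * (c * p (c * x)) ≤ 0 := by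
      intro x
      rcases lt_trichotomy x 0 with hx | hx | hx
      · have h1 := (hR (-x) (by linarith)).le
        rw [neg_neg] at h1
        have hpn : 0 ≤ c * p (c * x) := mul_nonneg hc0.le (hnn _)
        nlinarith [h1, hpn]
      · subst hx
        have h0 : f 0 + f (-0) - 2 * f 0 = 0 := by rw [neg_zero]; ring
        rw [h0, zero_mul]
      · have h1 := (hR x hx).le
        have hpn : 0 ≤ c * p (c * x) := mul_nonneg hc0.le (hnn _)
        nlinarith [h1, hpn]
    have hInt : Integrable (fun x => (f x + f (-x) - 2 * f 0) * (c * p (c * x))) := by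
      have h := (t1.add t2).sub t3
      refine h.congr (Filter.Eventually.of_forall fun x => ?_)
      simp only [Pi.add_apply, Pi.sub_apply]
      ring
    have hneg : (∫ x, (f x + f (-x) - 2 * f 0) * (c * p (c * x))) < 0 := by
      rcases lt_or_eq_of_le (integral_nonpos (fun x => hRle x)) with h | h
      · exact h
      · exfalso
        -- the integrand must be a.e. zero
        have hzero : (fun x => -((f x + f (-x) - 2 * f 0) * (c * p (c * x)))) =ᵐ[volume] 0 := by
          refine (integral_eq_zero_iff_of_nonneg
            (f := fun x => -((f x + f (-x) - 2 * f 0) * (c * p (c * x))))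
            (fun x => by simpa using hRle x) hInt.neg).1 ?_
          rw [integral_neg, h, neg_zero]
        have hpz : (fun x => p (c * x)) =ᵐ[volume.restrict (Ioi (0:ℝ))] 0 := by
          have := ae_restrict_of_ae (μ := volume) (s := Ioi (0:ℝ)) hzero
          rw [Filter.EventuallyEq]
          rw [ae_restrict_iff' measurableSet_Ioi] at this ⊢
          filter_upwards [this] with x hx hx0
          have h1 := hx hx0
          have h2 : (f x + f (-x) - 2 * f 0) * (c * p (c * x)) = 0 := by
            simpa using h1
          have h3 : f x + f (-x) - 2 * f 0 ≠ 0 := (hR x hx0).ne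
          have h4 : c * p (c * x) = 0 := by
            rcases mul_eq_zero.1 h2 with h | h
            · exact absurd h h3
            · exact h
          have := mul_eq_zero.1 h4
          rcases this with h | h
          · exact absurd h hc0.ne'
          · simpa using h
        have : (∫ x in Ioi (0:ℝ), p (c * x)) = 0 := by
          rw [integral_congr_ae hpz]; simp
        exact absurd this (hpos γ hγ).ne'
    -- put it together
    have hexp : 2 * (∫ x, f x * (c * p (c * x))) =
        (∫ x, (f x + f (-x) - 2 * f 0) * (c * p (c * x))) + 2 * f 0 := by
      have h4 : (∫ x, (2 * f 0) * (c * p (c * x))) = 2 * f 0 := by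
        rw [integral_const_mul (2 * f 0) (fun x => c * p (c * x)), hmass, mul_one]
      have e3 : (∫ x, ((f x * (c * p (c * x)) + f (-x) * (c * p (c * x)))
            - (2 * f 0) * (c * p (c * x)))) =
          (∫ x, (f x * (c * p (c * x)) + f (-x) * (c * p (c * x))))
            - ∫ x, (2 * f 0) * (c * p (c * x)) :=
        integral_sub (t1.add t2) t3
      have e2 : (∫ x, (f x * (c * p (c * x)) + f (-x) * (c * p (c * x)))) =
          (∫ x, f x * (c * p (c * x))) + (∫ x, f (-x) * (c * p (c * x))) :=
        integral_add t1 t2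
      have hsplit : (∫ x, (f x + f (-x) - 2 * f 0) * (c * p (c * x))) =
          (∫ x, f x * (c * p (c * x))) + (∫ x, f (-x) * (c * p (c * x)))
            - (∫ x, (2 * f 0) * (c * p (c * x))) := by
        rw [← e2, ← e3]
        refine integral_congr_ae (Filter.Eventually.of_forall fun x => ?_)
        ring
      rw [hsplit, hsym, h4]
      ring
    linarith [hneg, hexp]
  refine ⟨key, ?_⟩
  rintro hlub ⟨γ₀, hγ₀, hmax⟩
  have hub : f 0 ≤ ∫ x, f x * (Real.sqrt γ₀ * p (Real.sqrt γ₀ * x)) := by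
    apply hlub.2
    rintro y ⟨γ, hγ, rfl⟩
    exact hmax γ hγ
  exact absurd hub (not_le.2 (key γ₀ hγ₀))
end

section
/- Let μ, σ ∈ ℝ with σ > 0, and let f be the Gaussian density with mean μ and variance σ². Define R̄₁(x) = f(x) + f(−x) − 2f(0). Then R̄₁(x) < 0 for all x > 0 if and only if μ² ≤ σ². -/
/-!
Writing `f` for the `N(μ, σ²)` density, completing the square gives
`f x + f (-x) = 2 f 0 · cosh (μ x / σ²) · exp (-x² / (2σ²))`, so `R̄₁(x) < 0` iff
`cosh (a t) < exp (t² / 2)` with `a = μ / σ`, `t = x / σ`. For `|a| ≤ 1` this follows from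
`cosh (a t) ≤ cosh t < exp (t² / 2)` (compare the power series termwise). For `|a| > 1` the
second-order Taylor expansions `1 + a² t² / 2` and `1 + t² / 2` show the inequality fails for small `t`.
-/

open Real

namespace Real

lemma cosh_lt_exp_half_sq {x : ℝ} (hx : x ≠ 0) : cosh x < exp (x ^ 2 / 2) := by
  rw [cosh_eq_tsum, exp_eq_exp_ℝ, NormedSpace.exp_eq_tsum ℝ]
  refine Summable.tsum_lt_tsum_of_nonneg (i := 2)
    (fun n => div_nonneg ((even_two_mul n).pow_nonneg x) (by positivity)) (fun n => ?_) ?_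
    (NormedSpace.expSeries_summable' (x ^ 2 / 2))
  · simp only [div_pow, pow_mul, smul_eq_mul, inv_mul_eq_div, div_div]
    gcongr
    norm_cast
    exact Nat.two_pow_mul_factorial_le_factorial_two_mul _
  · simp only [div_pow, pow_mul, smul_eq_mul, inv_mul_eq_div, div_div]
    have hx4 : 0 < (x ^ 2) ^ 2 := by positivity
    rw [div_lt_div_iff₀ (by norm_num [Nat.factorial]) (by norm_num [Nat.factorial])]
    norm_num [Nat.factorial]
    linarith

lemma one_add_sq_div_two_le_cosh (x : ℝ) : 1 + x ^ 2 / 2 ≤ cosh x := by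
  have h := x.hasSum_cosh.summable.sum_le_tsum (Finset.range 2)
    (fun i _ => div_nonneg ((even_two_mul i).pow_nonneg x) (by positivity))
  rw [x.hasSum_cosh.tsum_eq] at h
  simpa [Finset.sum_range_succ, Nat.factorial] using h

lemma exp_le_one_add_add_sq {y : ℝ} (hy : |y| ≤ 1) : exp y ≤ 1 + y + y ^ 2 := by
  linarith [le_abs_self (exp y - 1 - y), abs_exp_sub_one_sub_id_le hy]

lemma cosh_mul_lt_exp_half_sq_of_sq_le_one {a t : ℝ} (ha : a ^ 2 ≤ 1) (ht : t ≠ 0) :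
    cosh (a * t) < exp (t ^ 2 / 2) :=
  calc cosh (a * t) ≤ cosh t := by
        rw [cosh_le_cosh, abs_mul]
        exact mul_le_of_le_one_left (abs_nonneg t) (abs_le_one_iff_mul_self_le_one.2 (by nlinarith))
    _ < exp (t ^ 2 / 2) := cosh_lt_exp_half_sq ht

lemma sq_le_one_of_forall_cosh_mul_lt_exp_half_sq {a : ℝ}
    (h : ∀ t > 0, cosh (a * t) < exp (t ^ 2 / 2)) : a ^ 2 ≤ 1 := by
  by_contra! ha
  set t := min 1 (a ^ 2 - 1)
  have ht : 0 < t := lt_min one_pos (by linarith)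
  have ht_le_one : t ≤ 1 := min_le_left _ _
  have ht_le : t ≤ a ^ 2 - 1 := min_le_right _ _
  have hexp : exp (t ^ 2 / 2) ≤ 1 + t ^ 2 / 2 + (t ^ 2 / 2) ^ 2 :=
    exp_le_one_add_add_sq (by rw [abs_le]; constructor <;> nlinarith)
  have hcosh := one_add_sq_div_two_le_cosh (a * t)
  have hsq : t ^ 2 ≤ a ^ 2 - 1 := by nlinarith
  nlinarith [h t ht, mul_le_mul_of_nonneg_left hsq (sq_nonneg t), pow_pos ht 2]

theorem forall_cosh_mul_lt_exp_half_sq_iff (a : ℝ) :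
    (∀ t > 0, cosh (a * t) < exp (t ^ 2 / 2)) ↔ a ^ 2 ≤ 1 :=
  ⟨sq_le_one_of_forall_cosh_mul_lt_exp_half_sq,
    fun ha _ ht => cosh_mul_lt_exp_half_sq_of_sq_le_one ha ht.ne'⟩

end Real

lemma exp_neg_sq_sub_add_exp_neg_sq_neg_sub (μ s x : ℝ) :
    exp (-(x - μ) ^ 2 / (2 * s)) + exp (-(-x - μ) ^ 2 / (2 * s))
      = 2 * exp (-(0 - μ) ^ 2 / (2 * s)) * (cosh (μ * x / s) / exp (x ^ 2 / (2 * s))) := by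
  have h₁ : -(x - μ) ^ 2 / (2 * s) = -(0 - μ) ^ 2 / (2 * s) + μ * x / s - x ^ 2 / (2 * s) := by
    ring
  have h₂ : -(-x - μ) ^ 2 / (2 * s) = -(0 - μ) ^ 2 / (2 * s) + -(μ * x / s) - x ^ 2 / (2 * s) := by
    ring
  rw [h₁, h₂, exp_sub, exp_sub, exp_add, exp_add, cosh_eq]
  ring

theorem gaussian_symm_sub_two_mul_lt_zero_iff (μ x : ℝ) {c s : ℝ} (hc : 0 < c) :
    c * exp (-(x - μ) ^ 2 / (2 * s)) + c * exp (-(-x - μ) ^ 2 / (2 * s))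
        - 2 * (c * exp (-(0 - μ) ^ 2 / (2 * s))) < 0
      ↔ cosh (μ * x / s) < exp (x ^ 2 / (2 * s)) := by
  rw [sub_neg, ← mul_add, ← mul_left_comm, mul_lt_mul_iff_right₀ hc,
    exp_neg_sq_sub_add_exp_neg_sq_neg_sub, mul_lt_iff_lt_one_right (by positivity),
    div_lt_one (exp_pos _)]

theorem stmt12 (μ σ : ℝ) (hσ : 0 < σ) :
    (∀ x > (0:ℝ),
      (1 / Real.sqrt (2 * π * σ ^ 2)) * Real.exp (-(x - μ) ^ 2 / (2 * σ ^ 2))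
      + (1 / Real.sqrt (2 * π * σ ^ 2)) * Real.exp (-(-x - μ) ^ 2 / (2 * σ ^ 2))
      - 2 * ((1 / Real.sqrt (2 * π * σ ^ 2)) * Real.exp (-(0 - μ) ^ 2 / (2 * σ ^ 2))) < 0)
    ↔ μ ^ 2 ≤ σ ^ 2 := by
  have hc : 0 < 1 / Real.sqrt (2 * π * σ ^ 2) := by have := pi_pos; positivity
  have rescale (x : ℝ) : μ * x / σ ^ 2 = μ / σ * (x / σ) ∧ x ^ 2 / (2 * σ ^ 2) = (x / σ) ^ 2 / 2 :=
    ⟨by field_simp, by field_simp⟩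
  calc _ ↔ ∀ x > (0:ℝ), cosh (μ / σ * (x / σ)) < exp ((x / σ) ^ 2 / 2) := by
        refine forall₂_congr fun x _ => ?_
        rw [gaussian_symm_sub_two_mul_lt_zero_iff μ x hc, (rescale x).1, (rescale x).2]
    _ ↔ ∀ t > (0:ℝ), cosh (μ / σ * t) < exp (t ^ 2 / 2) :=
        ⟨fun h t ht => by simpa [hσ.ne'] using h (σ * t) (by positivity),
          fun h x hx => h _ (div_pos hx hσ)⟩
    _ ↔ (μ / σ) ^ 2 ≤ 1 := forall_cosh_mul_lt_exp_half_sq_iff _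
    _ ↔ μ ^ 2 ≤ σ ^ 2 := by rw [div_pow, div_le_one (by positivity)]
end
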